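/- Let c, d, n be positive integers with gcd(c, n) = d. Then the Galkin quandles G(Z_n, c) and G(Z_n, d) are isomorphic. -/
import Mathlib


/-- The function `μ` with `μ(0) = 2`, `μ(1) = μ(2) = -1`. -/
def galkinMu : ZMod 3 → ℤ := fun x => if x = 0 then 2 else -1

/-- The function `τ` with `τ(0) = 0`, `τ(1) = c₁`, `τ(2) = c₂`. -/
def galkinTau {A : Type*} [AddCommGroup A] (c₁ c₂ : A) : ZMod 3 → A :=
  fun x => if x = 1 then c₁ else if x = 2 then c₂ else 0

/-- The Galkin quandle operation on `ZMod 3 × A` for the quandle `G(A, c₁, c₂)`. -/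
def galkinOp {A : Type*} [AddCommGroup A] (c₁ c₂ : A) (p q : ZMod 3 × A) : ZMod 3 × A :=
  (2 * q.1 - p.1, -p.2 + galkinMu (p.1 - q.1) • q.2 + galkinTau c₁ c₂ (p.1 - q.1))

/-- If `gcd c n = d`, there is a unit `v` of `ZMod n` with `v * c = d`. -/
lemma exists_unit_mul_eq_gcd (c d n : ℕ) (hn : 0 < n) (h : Nat.gcd c n = d) :
    ∃ v : ZMod n, IsUnit v ∧ v * (c : ZMod n) = (d : ZMod n) := by
  have : NeZero n := ⟨hn.ne'⟩
  obtain ⟨d', hd'n, u, hu, hcu⟩ := ZMod.eq_unit_mul_divisor (c : ZMod n)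
  have h3 : addOrderOf ((c : ZMod n)) = addOrderOf ((d' : ZMod n)) := by
    rw [hcu]
    exact addOrderOf_injective (AddMonoidHom.mulLeft u) hu.mul_right_injective _
  rw [ZMod.addOrderOf_coe c hn.ne', ZMod.addOrderOf_coe d' hn.ne'] at h3
  have hgc : n.gcd c = d := by rw [Nat.gcd_comm]; exact h
  have hgd' : n.gcd d' = d' := Nat.gcd_eq_right hd'n
  rw [hgc, hgd'] at h3
  have hdn : d ∣ n := h ▸ Nat.gcd_dvd_right c n
  have hdd' : d' = d := by
    rw [← Nat.div_div_self hd'n hn.ne', ← h3, Nat.div_div_self hdn hn.ne']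
  subst hdd'
  refine ⟨↑hu.unit⁻¹, (hu.unit⁻¹).isUnit, ?_⟩
  rw [hcu, ← mul_assoc]
  rw [hu.val_inv_mul, one_mul]

theorem stmt_7 (c d n : ℕ) (hc : 0 < c) (hd : 0 < d) (hn : 0 < n)
    (h : Nat.gcd c n = d) :
    ∃ φ : ZMod 3 × ZMod n → ZMod 3 × ZMod n, Function.Bijective φ ∧
      ∀ p q : ZMod 3 × ZMod n,
        φ (galkinOp 0 (c : ZMod n) p q) = galkinOp 0 (d : ZMod n) (φ p) (φ q) := by
  obtain ⟨v, hv, hvc⟩ := exists_unit_mul_eq_gcd c d n hn h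
  obtain ⟨w, hw1, hw2⟩ := isUnit_iff_exists.mp hv
  refine ⟨fun p => (p.1, v * p.2), ?_, ?_⟩
  · apply Function.bijective_iff_has_inverse.mpr
    refine ⟨fun p => (p.1, w * p.2), fun p => ?_, fun p => ?_⟩
    · simp [← mul_assoc, hw2]
    · simp [← mul_assoc, hw1]
  · intro p q
    simp only [galkinOp, Prod.mk.injEq]
    refine ⟨trivial, ?_⟩
    have hτ : v * galkinTau 0 (c : ZMod n) (p.1 - q.1)
        = galkinTau 0 (d : ZMod n) (p.1 - q.1) := by
      unfold galkinTau
      split_ifs <;> simp [hvc]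
    rw [mul_add, mul_add, mul_neg, mul_smul_comm, hτ]
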